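/- Uniqueness of the bad world: Assume ob satisfies all axioms 5(a), 5(b), 5(c) (strong), 5(d), 5(e). If a and b are both bad (a is bad iff ∃ X, a ∈ X ∧ X \ {a} ∈ ob X), then a = b. -/

import Mathlib

/-! A bad world `a` makes `{a}ᶜ` obligatory in the whole space, by 5(d). If `b ≠ a` is also bad,
restricting to the context `{a, b}` by 5(e) makes both `{a}ᶜ` and `{b}ᶜ` obligatory there; by 5(c)
so is their intersection, which misses `{a, b}` entirely, contradicting 5(a) and 5(b). -/

open Set

section Obligation

variable {W : Type*} (ob : Set W → Set (Set W))

theorem compl_singleton_mem_ob_univ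
    (h5d : ∀ X Y Z : Set W, Y ⊆ X → X ⊆ Z → Y ∈ ob X → (Z \ X) ∪ Y ∈ ob Z)
    {a : W} {X : Set W} (haX : a ∈ X) (hbad : X \ {a} ∈ ob X) : {a}ᶜ ∈ ob univ := by
  have h := h5d X (X \ {a}) univ sdiff_subset (subset_univ X) hbad
  have hcompl : (univ \ X) ∪ (X \ {a}) = {a}ᶜ := by
    ext x
    by_cases hx : x = a <;> simp [hx, haX, em']
  rwa [hcompl] at h

theorem inter_inter_nonempty_of_mem_ob
    (h5a : ∀ X : Set W, ∅ ∉ ob X)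
    (h5b : ∀ X Y Z : Set W, Y ∩ X = Z ∩ X → (Y ∈ ob X ↔ Z ∈ ob X))
    (h5c : ∀ X Y Z : Set W, Y ∈ ob X → Z ∈ ob X → Y ∩ Z ∈ ob X)
    {X Y Z : Set W} (hY : Y ∈ ob X) (hZ : Z ∈ ob X) : (Y ∩ Z ∩ X).Nonempty := by
  rw [nonempty_iff_ne_empty]
  intro hempty
  refine h5a X ((h5b X _ ∅ ?_).mp (h5c X Y Z hY hZ))
  rw [hempty, empty_inter]

end Obligation

theorem stmt17_general {W : Type*} (ob : Set W → Set (Set W)) (a b : W)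
    (h5a : ∀ X : Set W, ∅ ∉ ob X)
    (h5b : ∀ X Y Z : Set W, Y ∩ X = Z ∩ X → (Y ∈ ob X ↔ Z ∈ ob X))
    (h5c : ∀ X Y Z : Set W, Y ∈ ob X → Z ∈ ob X → Y ∩ Z ∈ ob X)
    (h5d : ∀ X Y Z : Set W, Y ⊆ X → X ⊆ Z → Y ∈ ob X → (Z \ X) ∪ Y ∈ ob Z)
    (h5e : ∀ X Y Z : Set W, Y ⊆ X → Z ∈ ob X → Y ∩ Z ≠ ∅ → Z ∈ ob Y)
    (ha : ∃ X : Set W, a ∈ X ∧ X \ {a} ∈ ob X)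
    (hb : ∃ X : Set W, b ∈ X ∧ X \ {b} ∈ ob X) :
    a = b := by
  by_contra hne
  obtain ⟨X, haX, hbadX⟩ := ha
  obtain ⟨Y, hbY, hbadY⟩ := hb
  have hna : {a}ᶜ ∈ ob {a, b} := by
    refine h5e univ {a, b} _ (subset_univ _) (compl_singleton_mem_ob_univ ob h5d haX hbadX) ?_
    exact nonempty_iff_ne_empty.mp ⟨b, by simp [Ne.symm hne]⟩
  have hnb : {b}ᶜ ∈ ob {a, b} := by
    refine h5e univ {a, b} _ (subset_univ _) (compl_singleton_mem_ob_univ ob h5d hbY hbadY) ?_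
    exact nonempty_iff_ne_empty.mp ⟨a, by simp [hne]⟩
  obtain ⟨x, ⟨hxa, hxb⟩, hx⟩ := inter_inter_nonempty_of_mem_ob ob h5a h5b h5c hna hnb
  rcases hx with rfl | rfl
  exacts [hxa rfl, hxb rfl]

theorem stmt17 {W : Type*} [Fintype W] (ob : Set W → Set (Set W)) (a b : W)
    (h5a : ∀ X : Set W, ∅ ∉ ob X)
    (h5b : ∀ X Y Z : Set W, Y ∩ X = Z ∩ X → (Y ∈ ob X ↔ Z ∈ ob X))
    (h5c : ∀ X Y Z : Set W, Y ∈ ob X → Z ∈ ob X → Y ∩ Z ∈ ob X)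
    (h5d : ∀ X Y Z : Set W, Y ⊆ X → X ⊆ Z → Y ∈ ob X → (Z \ X) ∪ Y ∈ ob Z)
    (h5e : ∀ X Y Z : Set W, Y ⊆ X → Z ∈ ob X → Y ∩ Z ≠ ∅ → Z ∈ ob Y)
    (ha : ∃ X : Set W, a ∈ X ∧ X \ {a} ∈ ob X)
    (hb : ∃ X : Set W, b ∈ X ∧ X \ {b} ∈ ob X) :
    a = b :=
  stmt17_general ob a b h5a h5b h5c h5d h5e ha hb
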